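/- The quaternion group Q_8 of order 8 is supersolvable and metabelian, but Q_8 does not embed into any finite direct product G_{p_1} × … × G_{p_s} with p_1,…,p_s primes. Consequently the class of finite groups embeddable into such products is strictly contained in the class of finite supersolvable metabelian groups. -/

import Mathlib

/-- A finite group is supersolvable: there is a chain `1 = G₀ ≤ G₁ ≤ … ≤ G_k = G` of
subgroups, each normal in `G`, with each quotient `G_{i+1}/G_i` cyclic (expressed as: some
`g ∈ G_{i+1}` is such that every element of `G_{i+1}` is of the form `g ^ m * y` with
`y ∈ G_i`). -/
def IsSupersolvableGroup (G : Type*) [Group G] : Prop :=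
  ∃ (k : ℕ) (c : Fin (k + 1) → Subgroup G),
    c 0 = ⊥ ∧ c (Fin.last k) = ⊤ ∧
    (∀ i : Fin k, c i.castSucc ≤ c i.succ) ∧
    (∀ i : Fin (k + 1), (c i).Normal) ∧
    (∀ i : Fin k, ∃ g ∈ c i.succ, ∀ x ∈ c i.succ,
      ∃ (m : ℤ) (y : G), y ∈ c i.castSucc ∧ x = g ^ m * y)

/-- The holomorph-type action: a unit `u` of `ZMod p` acts on the additive group `ZMod p`
(viewed multiplicatively) by multiplication by `u`. -/
def holAction (p : ℕ) : (ZMod p)ˣ →* MulAut (Multiplicative (ZMod p)) where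
  toFun u := AddEquiv.toMultiplicative (AddAut.mulLeft u)
  map_one' := by ext x; exact one_smul (ZMod p)ˣ (Multiplicative.toAdd x)
  map_mul' u v := by ext x; exact congrArg Multiplicative.ofAdd (mul_smul u v (Multiplicative.toAdd x))

/-- `G_p = (ℤ/pℤ) ⋊ (ℤ/pℤ)ˣ`, the holomorph of the cyclic group of order `p`, with units
acting by multiplication. -/
def Holo (p : ℕ) : Type :=
  SemidirectProduct (Multiplicative (ZMod p)) (ZMod p)ˣ (holAction p)

instance (p : ℕ) : Group (Holo p) :=
  inferInstanceAs (Group (SemidirectProduct _ _ _))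

/-- `G` embeds into a finite direct product of groups `G_p` (`p` prime). -/
def EmbedsInHolos (G : Type*) [Group G] : Prop :=
  ∃ (s : ℕ) (ps : Fin s → ℕ), (∀ i, (ps i).Prime) ∧
    ∃ f : G →* (∀ i, Holo (ps i)), Function.Injective f

/-!
In `G_p` the image of `G_p → (ℤ/p)ˣ` is cyclic (`p` prime) and its kernel `ℤ/p` is cyclic, so
`1 ≤ ℤ/p ≤ G_p` is a cyclic normal series; running through such series one factor at a time gives
one for `G_{p_1} × … × G_{p_s}`, and it pulls back along an injection because subgroups of cyclic
groups are cyclic. The derived subgroup of the product lies in the abelian kernel `∏ ℤ/p_i`,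
which gives metabelianness of every subgroup.

`Q_8` has the cyclic normal series `1 < Z(Q_8) < ⟨i⟩ < Q_8`, and its commutators are central.
It does not embed: `-1 = [i, j]` is a nontrivial commutator with `(-1)² = 1`, whereas in `G_p`
every commutator lies in `ℤ/p`, which has no element of order `2` for odd `p`, and `G_2` is
abelian since `(ℤ/2)ˣ` is trivial.
-/

section CyclicStep

variable {G : Type*} [Group G]

/-- `K / H` is cyclic, in the form used by `IsSupersolvableGroup`. -/
def IsCyclicStep (H K : Subgroup G) : Prop :=
  ∃ g ∈ K, ∀ x ∈ K, ∃ (m : ℤ) (y : G), y ∈ H ∧ x = g ^ m * y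

theorem isCyclicStep_of_le_zpowers {H K : Subgroup G} {g : G} (hg : g ∈ K)
    (hK : K ≤ Subgroup.zpowers g) : IsCyclicStep H K := by
  refine ⟨g, hg, fun x hx => ?_⟩
  obtain ⟨m, rfl⟩ := Subgroup.mem_zpowers_iff.mp (hK hx)
  exact ⟨m, 1, H.one_mem, (mul_one _).symm⟩

theorem isCyclicStep_of_isCyclic_map {Q : Type*} [Group Q] {H K : Subgroup G} (φ : G →* Q)
    (hφ : IsCyclic (K.map φ)) (hker : ∀ x ∈ K, φ x = 1 → x ∈ H) : IsCyclicStep H K := by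
  obtain ⟨⟨_, g, hg, rfl⟩, hgen⟩ := hφ.exists_generator
  refine ⟨g, hg, fun x hx => ?_⟩
  obtain ⟨m, hm⟩ := Subgroup.mem_zpowers_iff.mp (hgen ⟨φ x, x, hx, rfl⟩)
  have hφm : φ (g ^ m) = φ x := by simpa using congrArg Subtype.val hm
  refine ⟨m, (g ^ m)⁻¹ * x, hker _ (K.mul_mem (K.inv_mem (K.zpow_mem hg m)) hx) ?_, by group⟩
  rw [map_mul, map_inv, hφm, inv_mul_cancel]

theorem IsCyclicStep.isCyclic_map_mk' {H K : Subgroup G} [H.Normal] (h : IsCyclicStep H K) :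
    IsCyclic (K.map (QuotientGroup.mk' H)) := by
  obtain ⟨g, -, hgen⟩ := h
  refine Subgroup.isCyclic_of_le (H' := Subgroup.zpowers (QuotientGroup.mk' H g)) ?_
  rintro _ ⟨x, hx, rfl⟩
  obtain ⟨m, y, hy, rfl⟩ := hgen x hx
  exact ⟨m, by simp [(QuotientGroup.eq_one_iff y).mpr hy]⟩

theorem IsSupersolvableGroup.of_injective {P : Type*} [Group P] (f : G →* P)
    (hf : Function.Injective f) (hP : IsSupersolvableGroup P) : IsSupersolvableGroup G := by
  obtain ⟨k, c, hbot, htop, hmono, hnormal, hstep⟩ := hP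
  refine ⟨k, fun i => (c i).comap f, ?_, ?_, fun i => Subgroup.comap_mono (hmono i),
    fun i => (hnormal i).comap f, fun i => ?_⟩
  · show (c 0).comap f = ⊥
    rw [hbot, MonoidHom.comap_bot, MonoidHom.ker_eq_bot_iff]
    exact hf
  · show (c _).comap f = ⊤
    rw [htop, Subgroup.comap_top]
  · have := hnormal i.castSucc
    have := IsCyclicStep.isCyclic_map_mk' (hstep i)
    refine isCyclicStep_of_isCyclic_map ((QuotientGroup.mk' _).comp f)
      (Subgroup.isCyclic_of_le (H' := (c i.succ).map (QuotientGroup.mk' _)) ?_)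
      fun x _ hx => (QuotientGroup.eq_one_iff (f x)).mp hx
    rw [← Subgroup.map_map]
    exact Subgroup.map_mono (Subgroup.map_comap_le _ _)

structure IsSupersolvableSeries (c : ℕ → Subgroup G) (k : ℕ) : Prop where
  bot : c 0 = ⊥
  top : c k = ⊤
  mono : Monotone c
  normal : ∀ n, (c n).Normal
  step : ∀ n < k, IsCyclicStep (c n) (c (n + 1))

namespace IsSupersolvableSeries

variable {c : ℕ → Subgroup G} {k : ℕ}

theorem isSupersolvableGroup (h : IsSupersolvableSeries c k) : IsSupersolvableGroup G :=
  ⟨k, fun i => c i, h.bot, h.top, fun i => h.mono (Nat.le_succ i), fun i => h.normal i,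
    fun i => h.step i i.isLt⟩

theorem eq_top (h : IsSupersolvableSeries c k) {n : ℕ} (hn : k ≤ n) : c n = ⊤ :=
  top_unique (h.top ▸ h.mono hn)

end IsSupersolvableSeries

end CyclicStep

/-- Stage `n` is `c i (n - k * i)` in coordinate `i`: for `n = k * j + r` with `r < k` this is
`⊤` below `j`, `c j r` at `j`, and (by truncated subtraction) `c i 0 = ⊥` above `j`. -/
theorem IsSupersolvableSeries.pi {s k : ℕ} {G : Fin s → Type*} [∀ i, Group (G i)]
    {c : ∀ i, ℕ → Subgroup (G i)} (h : ∀ i, IsSupersolvableSeries (c i) k) :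
    IsSupersolvableSeries (fun n => Subgroup.pi Set.univ fun i => c i (n - k * i)) (k * s) where
  bot := by simp only [Nat.zero_sub, (h _).bot, Subgroup.pi_bot]
  top := by
    have (i : Fin s) : c i (k * s - k * i) = ⊤ :=
      (h i).eq_top (by have := Nat.mul_le_mul_left k i.isLt; rw [Nat.mul_succ] at this; omega)
    simp only [this, Subgroup.pi_top]
  mono n m hnm x hx i _ := (h i).mono (Nat.sub_le_sub_right hnm _) (hx i trivial)
  normal n := ⟨fun x hx g i _ => ((h i).normal _).conj_mem _ (hx i trivial) (g i)⟩
  step n hn := by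
    have hk : 0 < k := Nat.pos_of_ne_zero (by rintro rfl; simp at hn)
    let j : Fin s := ⟨n / k, Nat.div_lt_of_lt_mul hn⟩
    have hjn : k * j ≤ n := Nat.mul_div_le n k
    have hnj : n < k * j + k := by simpa [Nat.mul_succ] using Nat.lt_mul_div_succ n hk
    have hother (i : Fin s) (hij : i ≠ j) : c i (n + 1 - k * i) = c i (n - k * i) := by
      rcases lt_or_gt_of_ne hij with hlt | hgt
      · have := Nat.mul_le_mul_left k (Fin.lt_def.mp hlt)
        rw [Nat.mul_succ] at this
        rw [(h i).eq_top (by omega), (h i).eq_top (by omega)]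
      · have := Nat.mul_le_mul_left k (Fin.lt_def.mp hgt)
        rw [Nat.mul_succ] at this
        rw [show n + 1 - k * i = 0 by omega, show n - k * i = 0 by omega]
    have := (h j).normal (n - k * j)
    have := IsCyclicStep.isCyclic_map_mk' ((h j).step (n - k * j) (by omega))
    refine isCyclicStep_of_isCyclic_map
      ((QuotientGroup.mk' (c j (n - k * j))).comp (Pi.evalMonoidHom G j))
      (Subgroup.isCyclic_of_le (H' := (c j (n - k * j + 1)).map (QuotientGroup.mk' _)) ?_) ?_
    · rintro _ ⟨x, hx, rfl⟩
      exact ⟨x j, by simpa [Nat.sub_add_comm hjn] using hx j trivial, rfl⟩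
    · intro x hx hφ i _
      by_cases hij : i = j
      · subst hij
        exact (QuotientGroup.eq_one_iff _).mp hφ
      · show x i ∈ c i (n - k * i)
        exact hother i hij ▸ hx i trivial

namespace Holo

open scoped commutatorElement

variable {p : ℕ}

def rightHom (p : ℕ) : Holo p →* (ZMod p)ˣ := SemidirectProduct.rightHom

def inl (p : ℕ) : Multiplicative (ZMod p) →* Holo p := SemidirectProduct.inl

theorem range_inl : (inl p).range = (rightHom p).ker :=
  SemidirectProduct.range_inl_eq_ker_rightHom

theorem inl_injective : Function.Injective (inl p) := SemidirectProduct.inl_injective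

theorem commute_of_rightHom_eq_one {x y : Holo p} (hx : rightHom p x = 1)
    (hy : rightHom p y = 1) : x * y = y * x := by
  obtain ⟨a, rfl⟩ : x ∈ (inl p).range := range_inl ▸ hx
  obtain ⟨b, rfl⟩ : y ∈ (inl p).range := range_inl ▸ hy
  rw [← map_mul, ← map_mul, mul_comm]

theorem commutatorElement_eq_one_of_sq_eq_one (hp : p.Prime) {x y : Holo p}
    (h : ⁅x, y⁆ ^ 2 = 1) : ⁅x, y⁆ = 1 := by
  rcases hp.eq_two_or_odd' with rfl | hodd
  · exact commutatorElement_eq_one_iff_mul_comm.mpr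
      (commute_of_rightHom_eq_one (Subsingleton.elim _ _) (Subsingleton.elim _ _))
  · have hright : rightHom p ⁅x, y⁆ = 1 := by
      rw [map_commutatorElement, commutatorElement_eq_one_iff_mul_comm, mul_comm]
    obtain ⟨a, ha⟩ : ⁅x, y⁆ ∈ (inl p).range := range_inl ▸ hright
    rw [← ha, ← map_pow, ← map_one (inl p)] at h
    have : Multiplicative.toAdd a + Multiplicative.toAdd a = 0 := by
      simpa [sq] using congrArg Multiplicative.toAdd (inl_injective h)
    rw [← ha, show a = 1 from (ZMod.add_self_eq_zero_iff_eq_zero hodd).mp this, map_one]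

def cyclicSeries (p : ℕ) : ℕ → Subgroup (Holo p)
  | 0 => ⊥
  | 1 => (rightHom p).ker
  | _ + 2 => ⊤

theorem isSupersolvableSeries_cyclicSeries (hp : p.Prime) :
    IsSupersolvableSeries (cyclicSeries p) 2 where
  bot := rfl
  top := rfl
  mono := monotone_nat_of_le_succ fun
    | 0 => bot_le
    | _ + 1 => le_top
  normal
    | 0 => Subgroup.normal_bot
    | 1 => (rightHom p).normal_ker
    | _ + 2 => Subgroup.normal_top
  step
    | 0, _ => isCyclicStep_of_isCyclic_map (MonoidHom.id _)
        (by
          rw [Subgroup.map_id, cyclicSeries, ← range_inl]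
          exact isCyclic_of_surjective _ (inl p).rangeRestrict_surjective)
        fun _ _ hx => hx
    | 1, _ =>
        have := ZMod.isCyclic_units_prime hp
        isCyclicStep_of_isCyclic_map (rightHom p) inferInstance fun _ _ hx => hx

end Holo

namespace EmbedsInHolos

open scoped commutatorElement

variable {G : Type*} [Group G]

theorem isSupersolvableGroup (h : EmbedsInHolos G) : IsSupersolvableGroup G := by
  obtain ⟨s, ps, hps, f, hf⟩ := h
  exact (IsSupersolvableSeries.pi fun i => Holo.isSupersolvableSeries_cyclicSeries (hps i))
    |>.isSupersolvableGroup.of_injective f hf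

theorem commutator_commute (h : EmbedsInHolos G) (a b : commutator G) : a * b = b * a := by
  obtain ⟨s, ps, -, f, hf⟩ := h
  let φ : G →* ∀ i, (ZMod (ps i))ˣ :=
    (MonoidHom.pi fun i => (Holo.rightHom (ps i)).comp (Pi.evalMonoidHom _ i)).comp f
  have hright (x : commutator G) (i : Fin s) : Holo.rightHom (ps i) (f x i) = 1 :=
    congrFun (Abelianization.commutator_subset_ker φ x.2) i
  refine Subtype.ext (hf (funext fun i => ?_))
  simpa using Holo.commute_of_rightHom_eq_one (hright a i) (hright b i)

theorem commutatorElement_eq_one_of_sq_eq_one (h : EmbedsInHolos G) {g k : G}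
    (h2 : ⁅g, k⁆ ^ 2 = 1) : ⁅g, k⁆ = 1 := by
  obtain ⟨s, ps, hps, f, hf⟩ := h
  refine hf ((map_one f).symm ▸ funext fun i => ?_)
  have hi : ⁅f g i, f k i⁆ ^ 2 = 1 := by
    have := congrFun (congrArg f h2) i
    rwa [map_pow, map_commutatorElement, map_one] at this
  rw [map_commutatorElement]
  exact Holo.commutatorElement_eq_one_of_sq_eq_one (hps i) hi

end EmbedsInHolos

namespace QuaternionGroup

open scoped commutatorElement

local notation "Q₈" => QuaternionGroup 2

-- In this presentation `a 1 = i`, `xa 0 = j` and `a 2 = -1`.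

theorem center_le_zpowers_a_two : Subgroup.center Q₈ ≤ Subgroup.zpowers (a 2) := by
  intro x hx
  have : x = 1 ∨ x = a 2 := by
    revert x
    simp_rw [Subgroup.mem_center_iff]
    decide
  rcases this with rfl | rfl
  exacts [one_mem _, Subgroup.mem_zpowers _]

theorem zpowers_a_one_normal : (Subgroup.zpowers (a 1 : Q₈)).Normal := by
  refine Subgroup.normal_of_index_eq_two ?_
  have := (Subgroup.zpowers (a 1 : Q₈)).card_mul_index
  rw [Nat.card_zpowers, orderOf_a_one, Nat.card_eq_fintype_card, QuaternionGroup.card] at this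
  omega

theorem a_mem_zpowers_a_one (j : ZMod (2 * 2)) : a j ∈ Subgroup.zpowers (a 1 : Q₈) :=
  ⟨j.val, by dsimp only; rw [zpow_natCast, a_one_pow, ZMod.natCast_zmod_val]⟩

def cyclicSeries : ℕ → Subgroup Q₈
  | 0 => ⊥
  | 1 => Subgroup.center Q₈
  | 2 => Subgroup.zpowers (a 1)
  | _ + 3 => ⊤

theorem isSupersolvableSeries_cyclicSeries : IsSupersolvableSeries cyclicSeries 3 where
  bot := rfl
  top := rfl
  mono := monotone_nat_of_le_succ fun
    | 0 => bot_le
    | 1 => center_le_zpowers_a_two.trans (Subgroup.zpowers_le.mpr ⟨2, by decide⟩)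
    | _ + 2 => le_top
  normal
    | 0 => Subgroup.normal_bot
    | 1 => Subgroup.instNormalCenter
    | 2 => zpowers_a_one_normal
    | _ + 3 => Subgroup.normal_top
  step
    | 0, _ => isCyclicStep_of_le_zpowers
        (Subgroup.mem_center_iff.mpr (by decide)) center_le_zpowers_a_two
    | 1, _ => isCyclicStep_of_le_zpowers (Subgroup.mem_zpowers _) le_rfl
    | 2, _ => by
        refine ⟨xa 0, trivial, fun x _ => ?_⟩
        rcases x with j | j
        · exact ⟨0, a j, a_mem_zpowers_a_one j, by rw [zpow_zero, one_mul]⟩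
        · exact ⟨1, a j, a_mem_zpowers_a_one j, by rw [zpow_one, xa_mul_a, zero_add]⟩

theorem not_embedsInHolos : ¬ EmbedsInHolos Q₈ := fun h =>
  absurd (h.commutatorElement_eq_one_of_sq_eq_one (g := a 1) (k := xa 0) (by decide)) (by decide)

theorem commutator_commute (x y : commutator Q₈) : x * y = y * x := by
  have hcentral : commutator Q₈ ≤ Subgroup.center Q₈ := by
    rw [commutator_def, Subgroup.commutator_le]
    rintro g - h -
    rw [Subgroup.mem_center_iff]
    revert g h
    decide
  exact Subtype.ext (Subgroup.mem_center_iff.mp (hcentral y.2) x)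

end QuaternionGroup

/-- The quaternion group `Q₈` is supersolvable and metabelian, but does not embed into any
finite direct product `G_{p₁} × … × G_{p_s}` with the `pᵢ` prime. Consequently, the class of
finite groups embeddable into such products (which is contained in the class of finite
supersolvable metabelian groups) is strictly contained in it. -/
theorem stmt_12 :
    IsSupersolvableGroup (QuaternionGroup 2) ∧
    (∀ a b : commutator (QuaternionGroup 2), a * b = b * a) ∧
    ¬ EmbedsInHolos (QuaternionGroup 2) ∧
    (∀ (G : Type) [Group G] [Finite G], EmbedsInHolos G →
      IsSupersolvableGroup G ∧ (∀ a b : commutator G, a * b = b * a)) :=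
  ⟨QuaternionGroup.isSupersolvableSeries_cyclicSeries.isSupersolvableGroup,
    QuaternionGroup.commutator_commute, QuaternionGroup.not_embedsInHolos,
    fun _ _ _ h => ⟨h.isSupersolvableGroup, h.commutator_commute⟩⟩
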